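/- For all N ≥ 1 and subsets S, T ⊆ ℤ/N with |S| + |T| ≤ N, the configuration produced by the collapsing procedure (with any linear ordering of S) is characterized as follows: a site carries an anti-particle if and only if it belongs to T; a site a carries a particle if and only if a ∉ T and there is a cyclic interval I = {a, a+1, …, a+k} with 0 ≤ k < N such that |I ∩ S| + |I ∩ T| ≥ |I|; and all other sites are empty. -/

import Mathlib

/-- A site of the cycle is occupied by a particle, an anti-particle, or is empty. -/
inductive Site where
  | particle : Site
  | anti : Site
  | empty : Site
deriving DecidableEq

/-- The first unoccupied site reached from `p` by moving cyclically to the left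
(direction of decreasing index), given the set `occ` of occupied sites:
`p - k` for the least `k ≥ 0` (with `k < N`) such that `p - k` is unoccupied. -/
def targetSite (N : ℕ) [NeZero N] (occ : Finset (ZMod N)) (p : ZMod N) : Option (ZMod N) :=
  ((List.range N).find? fun k => decide ((p - (k : ZMod N)) ∉ occ)).map
    fun k => p - (k : ZMod N)

/-- Process a single element `p` of `S`: place a particle at `p` if unoccupied,
else at the first unoccupied site cyclically to the left of `p`.  Here `T` is the
set of anti-particles and `P` the set of particles placed so far. -/
def placeOne (N : ℕ) [NeZero N] (T : Finset (ZMod N)) (P : Finset (ZMod N)) (p : ZMod N) :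
    Finset (ZMod N) :=
  match targetSite N (T ∪ P) p with
  | some q => insert q P
  | none => P

/-- The set of particle positions produced by the collapsing procedure, processing
the elements of `S` in the order given by the list `L`. -/
def collapseParticles (N : ℕ) [NeZero N] (T : Finset (ZMod N)) (L : List (ZMod N)) :
    Finset (ZMod N) :=
  L.foldl (placeOne N T) ∅

/-- The configuration with anti-particles at `T` and particles at `P`. -/
def configOf (N : ℕ) [NeZero N] (T P : Finset (ZMod N)) : ZMod N → Site :=
  fun a => if a ∈ T then Site.anti else if a ∈ P then Site.particle else Site.empty

/-- The cyclic interval I = {a, a+1, …, a+k} in ℤ/N. -/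
def cInterval (N : ℕ) [NeZero N] (a : ZMod N) (k : ℕ) : Finset (ZMod N) :=
  (Finset.range (k + 1)).image fun j : ℕ => a + (j : ZMod N)

/-! ### Auxiliary lemmas -/

lemma find?_range_spec (p : ℕ → Bool) (N k : ℕ) (hk : k < N) (hpk : p k) :
    ∃ m, m < N ∧ (List.range N).find? p = some m ∧ p m ∧ ∀ j < m, ¬ p j := by
  induction N generalizing k with
  | zero => omega
  | succ n ih =>
    by_cases h : ∃ j, j < n ∧ p j
    · obtain ⟨j, hj, hpj⟩ := h
      obtain ⟨m, hm, hfind, hpm, hmin⟩ := ih j hj hpj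
      exact ⟨m, by omega, by
        rw [List.range_succ, List.find?_append, hfind]; rfl, hpm, hmin⟩
    · push_neg at h
      have hkn : k = n := by
        rcases Nat.lt_succ_iff_lt_or_eq.mp hk with h' | h'
        · exact absurd hpk (by simpa using h k h')
        · exact h'
      have hnone : (List.range n).find? p = none := by
        rw [List.find?_eq_none]
        intro x hx
        simpa using h x (List.mem_range.mp hx)
      refine ⟨n, Nat.lt_succ_self n, ?_, hkn ▸ hpk, fun j hj => by simpa using h j hj⟩
      rw [List.range_succ, List.find?_append, hnone, Option.none_or]
      simp [hkn ▸ hpk]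

section Aux

variable (N : ℕ) [NeZero N]

lemma zmod_val_eq (x a : ZMod N) : x = a + ((x - a).val : ZMod N) := by
  simp [ZMod.natCast_val, ZMod.cast_id]

lemma val_offset (a : ZMod N) (m : ℕ) (hm : m < N) : ((a + (m : ZMod N)) - a).val = m := by
  have h : a + (m : ZMod N) - a = (m : ZMod N) := by ring
  rw [h, ZMod.val_natCast_of_lt hm]

lemma mem_cInterval_exists {a x : ZMod N} {k : ℕ} :
    x ∈ cInterval N a k ↔ ∃ j, j ≤ k ∧ x = a + (j : ZMod N) := by
  simp only [cInterval, Finset.mem_image, Finset.mem_range, Nat.lt_succ_iff]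
  constructor
  · rintro ⟨j, hj, rfl⟩; exact ⟨j, hj, rfl⟩
  · rintro ⟨j, hj, rfl⟩; exact ⟨j, hj, rfl⟩

lemma mem_cInterval {a x : ZMod N} {k : ℕ} (hk : k < N) :
    x ∈ cInterval N a k ↔ (x - a).val ≤ k := by
  rw [mem_cInterval_exists]
  constructor
  · rintro ⟨j, hj, rfl⟩
    rw [val_offset N a j (by omega)]; exact hj
  · intro hx
    exact ⟨(x - a).val, hx, zmod_val_eq N x a⟩

lemma card_cInterval (a : ZMod N) {k : ℕ} (hk : k < N) :
    (cInterval N a k).card = k + 1 := by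
  rw [cInterval, Finset.card_image_of_injOn, Finset.card_range]
  intro j1 hj1 j2 hj2 h
  simp only [Finset.mem_coe, Finset.mem_range] at hj1 hj2
  have h' : (j1 : ZMod N) = (j2 : ZMod N) := add_left_cancel h
  have := congrArg ZMod.val h'
  rwa [ZMod.val_natCast_of_lt (by omega), ZMod.val_natCast_of_lt (by omega)] at this

lemma cInterval_univ (a : ZMod N) {k : ℕ} (hk : k + 1 = N) :
    cInterval N a k = Finset.univ := by
  apply Finset.eq_univ_iff_forall.mpr
  intro x
  rw [mem_cInterval N (by omega)]
  have := ZMod.val_lt (x - a)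
  omega

lemma mem_self_cInterval (a : ZMod N) (k : ℕ) (hk : k < N) : a ∈ cInterval N a k := by
  rw [mem_cInterval N hk, sub_self, ZMod.val_zero]
  omega

lemma targetSite_eq (occ : Finset (ZMod N)) (p : ZMod N) :
    targetSite N occ p = ((List.range N).find? (fun k : ℕ => decide ((p - (k:ZMod N)) ∉ occ))).map
      (fun k : ℕ => p - (k : ZMod N)) := by
  rw [targetSite]
  rw [show (do let a ← List.range N; pure ((a : ℕ) : ZMod N) : List (ZMod N)) =
    (List.range N).map (fun a : ℕ => (a : ZMod N)) by simp [List.map_eq_flatMap]]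
  rw [List.find?_map, Option.map_map]
  rfl

lemma targetSite_spec (occ : Finset (ZMod N)) (p : ZMod N) (h : occ.card < N) :
    ∃ kq, kq < N ∧ targetSite N occ p = some (p - (kq : ZMod N)) ∧
      (p - (kq : ZMod N)) ∉ occ ∧ ∀ j < kq, p - (j : ZMod N) ∈ occ := by
  have hx : ∃ x : ZMod N, x ∉ occ := by
    by_contra h'
    push_neg at h'
    have : occ = Finset.univ := Finset.eq_univ_iff_forall.mpr h'
    rw [this, Finset.card_univ, ZMod.card] at h
    omega
  obtain ⟨x, hx⟩ := hx
  have hk : p - (((p - x).val : ℕ) : ZMod N) = x := by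
    have h2 : (((p - x).val : ℕ) : ZMod N) = p - x := by
      simp [ZMod.natCast_val, ZMod.cast_id]
    rw [h2]; ring
  obtain ⟨m, hm, hfind, hpm, hmin⟩ := find?_range_spec
    (fun k => decide ((p - (k : ZMod N)) ∉ occ)) N (p - x).val (ZMod.val_lt _)
    (by simp [hk, hx])
  refine ⟨m, hm, ?_, by simpa using hpm, fun j hj => ?_⟩
  · rw [targetSite_eq, hfind, Option.map_some]
  · have := hmin j hj
    simpa using this

lemma placeOne_spec (T P : Finset (ZMod N)) (p : ZMod N) (h : (T ∪ P).card < N) :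
    ∃ (kq : ℕ), kq < N ∧ placeOne N T P p = insert (p - (kq : ZMod N)) P ∧
      (p - (kq : ZMod N)) ∉ T ∪ P ∧ ∀ j < kq, p - (j : ZMod N) ∈ T ∪ P := by
  obtain ⟨kq, hkq, hts, hfree, hpath⟩ := targetSite_spec N (T ∪ P) p h
  exact ⟨kq, hkq, by rw [placeOne, hts], hfree, hpath⟩

/-! ### The invariant -/

def CInv (T M P : Finset (ZMod N)) : Prop :=
  (T ∪ P).card ≤ T.card + M.card ∧
  (∀ a ∈ P, a ∉ T) ∧
  (∀ a, a ∉ T → a ∉ P → ∀ k, k < N →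
     (cInterval N a k ∩ M).card + (cInterval N a k ∩ T).card
       ≤ (cInterval N a k ∩ (T ∪ P)).card) ∧
  (∀ a k, k < N → (∀ j : ℕ, j ≤ k → a + (j : ZMod N) ∈ T ∪ P) →
     (k + 1 = N ∨ a + ((k + 1 : ℕ) : ZMod N) ∉ T ∪ P) →
     k + 1 ≤ (cInterval N a k ∩ M).card + (cInterval N a k ∩ T).card)

lemma cinv_init (T : Finset (ZMod N)) : CInv N T ∅ ∅ := by
  refine ⟨by simp, by simp, ?_, ?_⟩
  · intro a haT haP k hk
    simp
  · intro a k hk hall hbd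
    have hsub : cInterval N a k ⊆ T := by
      intro x hx
      obtain ⟨j, hj, rfl⟩ := (mem_cInterval_exists N).mp hx
      simpa using hall j hj
    have h1 : cInterval N a k ∩ T = cInterval N a k := Finset.inter_eq_left.mpr hsub
    rw [h1, card_cInterval N a hk]
    simp

end Aux

section Step

variable (N : ℕ) [NeZero N]

lemma cinv_step (T M P : Finset (ZMod N)) (p : ZMod N) (hInv : CInv N T M P)
    (hp : p ∉ M) (hcard : T.card + M.card + 1 ≤ N) :
    CInv N T (insert p M) (placeOne N T P p) := by
  obtain ⟨h1, h2, h3, h4⟩ := hInv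
  have hocc : (T ∪ P).card < N := by omega
  obtain ⟨kq, hkqN, hplace, hqfree, hpath⟩ := placeOne_spec N T P p hocc
  set q : ZMod N := p - (kq : ZMod N) with hqdef
  rw [hplace]
  have hTP' : T ∪ insert q P = insert q (T ∪ P) := by
    ext x; simp [or_assoc, or_comm, or_left_comm]
  have hMcard : (insert p M).card = M.card + 1 := Finset.card_insert_of_notMem hp
  have hcard' : (T ∪ insert q P).card ≤ T.card + (insert p M).card := by
    rw [hTP', hMcard]
    calc (insert q (T ∪ P)).card ≤ (T ∪ P).card + 1 := Finset.card_insert_le _ _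
    _ ≤ T.card + (M.card + 1) := by omega
  refine ⟨hcard', ?_, ?_, ?_⟩
  · -- particles not in T
    intro x hx
    rcases Finset.mem_insert.mp hx with rfl | hx
    · exact fun h => hqfree (Finset.mem_union_left _ h)
    · exact h2 x hx
  · -- Inv3
    intro a haT haP' k hk
    have haq : a ≠ q := fun h => haP' (h ▸ Finset.mem_insert_self _ _)
    have haP : a ∉ P := fun h => haP' (Finset.mem_insert_of_mem h)
    have hold := h3 a haT haP k hk
    have hMle : (cInterval N a k ∩ insert p M).card ≤ (cInterval N a k ∩ M).card + 1 := by
      calc (cInterval N a k ∩ insert p M).card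
          ≤ (insert p (cInterval N a k ∩ M)).card :=
            Finset.card_le_card (by intro x hx; simp at hx ⊢; tauto)
        _ ≤ (cInterval N a k ∩ M).card + 1 := Finset.card_insert_le _ _
    by_cases hpI : p ∈ cInterval N a k
    · -- q lands inside the interval
      have hja : (p - a).val ≤ k := (mem_cInterval N hk).mp hpI
      have hkqj : kq ≤ (p - a).val := by
        by_contra h'
        push_neg at h'
        have hmem := hpath _ h'
        have : p - (((p - a).val : ℕ) : ZMod N) = a := by
          have h2' : (((p - a).val : ℕ) : ZMod N) = p - a := by
            simp [ZMod.natCast_val, ZMod.cast_id]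
          rw [h2']; ring
        rw [this] at hmem
        rcases Finset.mem_union.mp hmem with h | h
        exacts [haT h, haP h]
      have hqI : q ∈ cInterval N a k := by
        rw [mem_cInterval N hk]
        have : q - a = (((p - a).val - kq : ℕ) : ZMod N) := by
          rw [Nat.cast_sub hkqj, hqdef]
          have h2' : (((p - a).val : ℕ) : ZMod N) = p - a := by
            simp [ZMod.natCast_val, ZMod.cast_id]
          rw [h2']; ring
        rw [this, ZMod.val_natCast_of_lt (by omega)]
        omega
      have hcount : (cInterval N a k ∩ (T ∪ insert q P)).card
          = (cInterval N a k ∩ (T ∪ P)).card + 1 := by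
        rw [hTP']
        have : cInterval N a k ∩ insert q (T ∪ P) = insert q (cInterval N a k ∩ (T ∪ P)) := by
          ext x; simp only [Finset.mem_inter, Finset.mem_insert]
          constructor
          · rintro ⟨hxI, rfl | hx⟩
            · exact Or.inl rfl
            · exact Or.inr ⟨hxI, hx⟩
          · rintro (rfl | ⟨hxI, hx⟩)
            · exact ⟨hqI, Or.inl rfl⟩
            · exact ⟨hxI, Or.inr hx⟩
        rw [this, Finset.card_insert_of_notMem (fun h => hqfree (Finset.mem_inter.mp h).2)]
      omega
    · -- p outside: nothing changes for the interval
      have hMeq : cInterval N a k ∩ insert p M = cInterval N a k ∩ M := by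
        ext x; simp only [Finset.mem_inter, Finset.mem_insert]
        constructor
        · rintro ⟨hxI, rfl | hx⟩
          · exact absurd hxI hpI
          · exact ⟨hxI, hx⟩
        · rintro ⟨hxI, hx⟩; exact ⟨hxI, Or.inr hx⟩
      have hle : (cInterval N a k ∩ (T ∪ P)).card ≤ (cInterval N a k ∩ (T ∪ insert q P)).card := by
        apply Finset.card_le_card
        refine Finset.inter_subset_inter Finset.Subset.rfl ?_
        rw [hTP']
        exact Finset.subset_insert _ _
      have hMeq' := congrArg Finset.card hMeq
      omega
  · -- Inv4
    intro a k hk hall hbd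
    by_cases hNfull : k + 1 = N
    · -- whole cycle occupied
      have huniv : T ∪ insert q P = Finset.univ := by
        apply Finset.eq_univ_iff_forall.mpr
        intro x
        have hv : (x - a).val ≤ k := by have := ZMod.val_lt (x - a); omega
        have := hall _ hv
        rwa [← zmod_val_eq] at this
      have hNle : N ≤ T.card + (insert p M).card := by
        rw [huniv, Finset.card_univ, ZMod.card] at hcard'
        exact hcard'
      rw [cInterval_univ N a hNfull, Finset.univ_inter, Finset.univ_inter]
      omega
    have hk1N : k + 1 < N := by omega
    have hbd' : a + ((k + 1 : ℕ) : ZMod N) ∉ T ∪ insert q P := hbd.resolve_left hNfull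
    have hbdP : a + ((k + 1 : ℕ) : ZMod N) ∉ T ∪ P := by
      intro h; exact hbd' (by rw [hTP']; exact Finset.mem_insert_of_mem h)
    by_cases hqI : q ∈ cInterval N a k
    swap
    · -- q outside the interval: old invariant applies directly
      have hall' : ∀ j : ℕ, j ≤ k → a + (j : ZMod N) ∈ T ∪ P := by
        intro j hj
        have hmem := hall j hj
        rw [hTP'] at hmem
        rcases Finset.mem_insert.mp hmem with h | h
        · exact absurd ((mem_cInterval N hk).mpr (by rw [← h, val_offset N a j (by omega)]; omega) : q ∈ cInterval N a k) hqI
        · exact h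
      have hold := h4 a k hk hall' (Or.inr hbdP)
      have hle : (cInterval N a k ∩ M).card ≤ (cInterval N a k ∩ insert p M).card :=
        Finset.card_le_card (Finset.inter_subset_inter Finset.Subset.rfl (Finset.subset_insert _ _))
      omega
    · -- q inside the interval
      set j := (q - a).val with hjdef
      have hj : j ≤ k := (mem_cInterval N hk).mp hqI
      have hqa : q = a + (j : ZMod N) := zmod_val_eq N q a
      -- the source p is also in the interval
      have hpI : p ∈ cInterval N a k := by
        by_contra hpI
        have hjkq : k + 1 ≤ j + kq := by
          by_contra h'
          push_neg at h'
          apply hpI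
          rw [mem_cInterval N hk]
          have hpq : p = q + (kq : ZMod N) := by rw [hqdef]; ring
          have : p - a = ((j + kq : ℕ) : ZMod N) := by
            rw [hpq, hqa]; push_cast; ring
          rw [this, ZMod.val_natCast_of_lt (by omega)]
          omega
        have hlt : kq - (k + 1 - j) < kq := by omega
        have key : a + ((k + 1 : ℕ) : ZMod N) = p - ((kq - (k + 1 - j) : ℕ) : ZMod N) := by
          have hpq : p = q + (kq : ZMod N) := by rw [hqdef]; ring
          rw [hpq, hqa, Nat.cast_sub (by omega : k + 1 - j ≤ kq),
            Nat.cast_sub (by omega : j ≤ k + 1)]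
          push_cast
          ring
        have := hpath _ hlt
        rw [← key] at this
        exact hbdP this
      -- split the interval at q
      obtain ⟨A1, hA1I, hA1lt, hA1bd⟩ : ∃ A1 : Finset (ZMod N), A1 ⊆ cInterval N a k ∧
          (∀ x ∈ A1, (x - a).val < j) ∧ j ≤ (A1 ∩ M).card + (A1 ∩ T).card := by
        rcases Nat.eq_zero_or_pos j with hj0 | hj0
        · exact ⟨∅, by simp, by simp, by simp [hj0]⟩
        · refine ⟨cInterval N a (j - 1), ?_, ?_, ?_⟩
          · intro x hx
            rw [mem_cInterval N (by omega)] at hx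
            rw [mem_cInterval N hk]
            omega
          · intro x hx
            rw [mem_cInterval N (by omega)] at hx
            omega
          · have := h4 a (j - 1) (by omega) ?_ (Or.inr ?_)
            · omega
            · intro j' hj'
              have hmem := hall j' (by omega)
              rw [hTP'] at hmem
              rcases Finset.mem_insert.mp hmem with h | h
              · exfalso
                have : (q - a).val = j' := by rw [← h, val_offset N a j' (by omega)]
                omega
              · exact h
            · rw [show j - 1 + 1 = j by omega, ← hqa]
              exact hqfree
      obtain ⟨A2, hA2I, hA2gt, hA2bd⟩ : ∃ A2 : Finset (ZMod N), A2 ⊆ cInterval N a k ∧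
          (∀ x ∈ A2, j < (x - a).val) ∧ k - j ≤ (A2 ∩ M).card + (A2 ∩ T).card := by
        rcases Nat.lt_or_ge j k with hjk | hjk
        swap
        · exact ⟨∅, by simp, by simp, by simp; omega⟩
        · have hoff : ∀ t : ℕ, t ≤ k - j - 1 →
              a + ((j + 1 : ℕ) : ZMod N) + (t : ZMod N) = a + ((j + 1 + t : ℕ) : ZMod N) := by
            intro t ht; push_cast; ring
          refine ⟨cInterval N (a + ((j + 1 : ℕ) : ZMod N)) (k - j - 1), ?_, ?_, ?_⟩
          · intro x hx
            obtain ⟨t, ht, rfl⟩ := (mem_cInterval_exists N).mp hx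
            rw [mem_cInterval N hk, hoff t ht, val_offset N a _ (by omega)]
            omega
          · intro x hx
            obtain ⟨t, ht, rfl⟩ := (mem_cInterval_exists N).mp hx
            rw [hoff t ht, val_offset N a _ (by omega)]
            omega
          · have := h4 (a + ((j + 1 : ℕ) : ZMod N)) (k - j - 1) (by omega) ?_ (Or.inr ?_)
            · omega
            · intro j' hj'
              rw [hoff j' hj']
              have hmem := hall (j + 1 + j') (by omega)
              rw [hTP'] at hmem
              rcases Finset.mem_insert.mp hmem with h | h
              · exfalso
                have : (q - a).val = j + 1 + j' := by rw [← h, val_offset N a _ (by omega)]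
                omega
              · exact h
            · rw [show a + ((j + 1 : ℕ) : ZMod N) + ((k - j - 1 + 1 : ℕ) : ZMod N)
                  = a + ((k + 1 : ℕ) : ZMod N) by
                rw [add_assoc, ← Nat.cast_add, show j + 1 + (k - j - 1 + 1) = k + 1 by omega]]
              exact hbdP
      -- combine
      have hdisj : Disjoint A1 A2 := by
        rw [Finset.disjoint_left]
        intro x hx1 hx2
        have := hA1lt x hx1
        have := hA2gt x hx2
        omega
      have hmain : (insert p ((A1 ∩ M) ∪ (A2 ∩ M))).card
          ≤ (cInterval N a k ∩ insert p M).card := by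
        apply Finset.card_le_card
        intro x hx
        rcases Finset.mem_insert.mp hx with rfl | hx
        · exact Finset.mem_inter.mpr ⟨hpI, Finset.mem_insert_self _ _⟩
        · rcases Finset.mem_union.mp hx with h | h
          · exact Finset.mem_inter.mpr ⟨hA1I (Finset.mem_inter.mp h).1,
              Finset.mem_insert_of_mem (Finset.mem_inter.mp h).2⟩
          · exact Finset.mem_inter.mpr ⟨hA2I (Finset.mem_inter.mp h).1,
              Finset.mem_insert_of_mem (Finset.mem_inter.mp h).2⟩
      have hpnot : p ∉ (A1 ∩ M) ∪ (A2 ∩ M) := by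
        intro h
        rcases Finset.mem_union.mp h with h | h
        · exact hp (Finset.mem_inter.mp h).2
        · exact hp (Finset.mem_inter.mp h).2
      have hcard1 : (insert p ((A1 ∩ M) ∪ (A2 ∩ M))).card
          = (A1 ∩ M).card + (A2 ∩ M).card + 1 := by
        rw [Finset.card_insert_of_notMem hpnot,
          Finset.card_union_of_disjoint (hdisj.mono Finset.inter_subset_left Finset.inter_subset_left)]
      have hTcount : (A1 ∩ T).card + (A2 ∩ T).card ≤ (cInterval N a k ∩ T).card := by
        rw [← Finset.card_union_of_disjoint (hdisj.mono Finset.inter_subset_left Finset.inter_subset_left)]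
        apply Finset.card_le_card
        intro x hx
        rcases Finset.mem_union.mp hx with h | h
        · exact Finset.mem_inter.mpr ⟨hA1I (Finset.mem_inter.mp h).1, (Finset.mem_inter.mp h).2⟩
        · exact Finset.mem_inter.mpr ⟨hA2I (Finset.mem_inter.mp h).1, (Finset.mem_inter.mp h).2⟩
      omega

end Step

section Final

variable (N : ℕ) [NeZero N]

lemma cinv_fold (T : Finset (ZMod N)) (L : List (ZMod N)) :
    ∀ (M P : Finset (ZMod N)), CInv N T M P → L.Nodup → (∀ x ∈ L, x ∉ M) →
      T.card + M.card + L.length ≤ N →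
      CInv N T (M ∪ L.toFinset) (L.foldl (placeOne N T) P) := by
  induction L with
  | nil => intro M P hInv _ _ _; simpa using hInv
  | cons p L' ih =>
    intro M P hInv hnd hLM hcard
    have hstep := cinv_step N T M P p hInv (hLM p List.mem_cons_self)
      (by simp at hcard; omega)
    have hnd' : L'.Nodup := (List.nodup_cons.mp hnd).2
    have hpL' : p ∉ L' := (List.nodup_cons.mp hnd).1
    have hLM' : ∀ x ∈ L', x ∉ insert p M := by
      intro x hx
      simp only [Finset.mem_insert, not_or]
      exact ⟨fun h => hpL' (h ▸ hx), hLM x (List.mem_cons_of_mem _ hx)⟩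
    have hcard' : T.card + (insert p M).card + L'.length ≤ N := by
      have : (insert p M).card ≤ M.card + 1 := Finset.card_insert_le _ _
      simp only [List.length_cons] at hcard
      omega
    have := ih (insert p M) (placeOne N T P p) hstep hnd' hLM' hcard'
    have hset : insert p M ∪ L'.toFinset = M ∪ (p :: L').toFinset := by
      ext x; simp [or_comm, or_assoc, or_left_comm]
    rw [hset] at this
    simpa using this

lemma final_char (T S P : Finset (ZMod N)) (hInv : CInv N T S P)
    (hST : T.card + S.card ≤ N) (a : ZMod N) :
    a ∈ P ↔ a ∉ T ∧ ∃ k, k < N ∧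
      (cInterval N a k).card ≤ (cInterval N a k ∩ S).card + (cInterval N a k ∩ T).card := by
  obtain ⟨h1, h2, h3, h4⟩ := hInv
  constructor
  · intro haP
    have haT : a ∉ T := h2 a haP
    refine ⟨haT, ?_⟩
    have haocc : a ∈ T ∪ P := Finset.mem_union_right _ haP
    by_cases hu : T ∪ P = Finset.univ
    · refine ⟨N - 1, by have := NeZero.pos N; omega, ?_⟩
      have hN1 : N - 1 + 1 = N := by have := NeZero.pos N; omega
      have := h4 a (N - 1) (by have := NeZero.pos N; omega)
        (fun j _ => hu ▸ Finset.mem_univ _) (Or.inl hN1)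
      rw [card_cInterval N a (by have := NeZero.pos N; omega)]
      omega
    · obtain ⟨b, hb⟩ : ∃ b, b ∉ T ∪ P := by
        by_contra h'
        push_neg at h'
        exact hu (Finset.eq_univ_iff_forall.mpr h')
      have hba : b ≠ a := fun h => hb (h ▸ haocc)
      have hd1 : 1 ≤ (b - a).val := by
        rcases Nat.eq_zero_or_pos (b - a).val with h | h
        · exfalso
          apply hba
          have := zmod_val_eq N b a
          rw [h] at this
          simpa using this
        · exact h
      have hdN : (b - a).val < N := ZMod.val_lt _
      have hex : ∃ m, a + ((m + 1 : ℕ) : ZMod N) ∉ T ∪ P := by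
        refine ⟨(b - a).val - 1, ?_⟩
        rw [show (b - a).val - 1 + 1 = (b - a).val by omega, ← zmod_val_eq]
        exact hb
      classical
      set m := Nat.find hex with hmdef
      have hmspec : a + ((m + 1 : ℕ) : ZMod N) ∉ T ∪ P := Nat.find_spec hex
      have hmmin : ∀ j < m, a + ((j + 1 : ℕ) : ZMod N) ∈ T ∪ P := by
        intro j hj
        by_contra h'
        exact Nat.find_min hex (by omega : j < Nat.find hex) h'
      have hmle : m ≤ (b - a).val - 1 := Nat.find_le (by
        rw [show (b - a).val - 1 + 1 = (b - a).val by omega, ← zmod_val_eq]; exact hb)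
      have hmN : m < N := by omega
      have hall : ∀ j : ℕ, j ≤ m → a + (j : ZMod N) ∈ T ∪ P := by
        intro j hj
        rcases Nat.eq_zero_or_pos j with rfl | hj0
        · simpa using haocc
        · rw [show j = (j - 1) + 1 by omega]
          exact hmmin (j - 1) (by omega)
      have := h4 a m hmN hall (Or.inr hmspec)
      refine ⟨m, hmN, ?_⟩
      rw [card_cInterval N a hmN]
      omega
  · rintro ⟨haT, k, hk, hcd⟩
    by_contra haP
    have hold := h3 a haT haP k hk
    have hsub : cInterval N a k ∩ (T ∪ P) ⊆ (cInterval N a k).erase a := by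
      intro x hx
      obtain ⟨hxI, hxTP⟩ := Finset.mem_inter.mp hx
      refine Finset.mem_erase.mpr ⟨?_, hxI⟩
      rintro rfl
      rcases Finset.mem_union.mp hxTP with h | h
      exacts [haT h, haP h]
    have hec : ((cInterval N a k).erase a).card = k := by
      rw [Finset.card_erase_of_mem (mem_self_cInterval N a k hk), card_cInterval N a hk]
      omega
    have := Finset.card_le_card hsub
    rw [card_cInterval N a hk] at hcd
    omega

end Final

/-- Characterization of the collapsed configuration on ℤ/N: a site carries an
anti-particle iff it belongs to T; a site `a` carries a particle iff `a ∉ T` and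
there is a cyclic interval I = {a, …, a+k}, 0 ≤ k < N, with |I ∩ S| + |I ∩ T| ≥ |I|;
all other sites are empty. -/
theorem collapse_characterization (N : ℕ) [NeZero N]
    (S T : Finset (ZMod N)) (hST : S.card + T.card ≤ N)
    (L : List (ZMod N)) (hL : L.Nodup) (hLS : L.toFinset = S) (a : ZMod N) :
    (configOf N T (collapseParticles N T L) a = Site.anti ↔ a ∈ T) ∧
    (configOf N T (collapseParticles N T L) a = Site.particle ↔
      a ∉ T ∧ ∃ k, k < N ∧
        (cInterval N a k).card ≤ (cInterval N a k ∩ S).card + (cInterval N a k ∩ T).card) ∧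
    (configOf N T (collapseParticles N T L) a = Site.empty ↔
      a ∉ T ∧ ¬ ∃ k, k < N ∧
        (cInterval N a k).card ≤ (cInterval N a k ∩ S).card + (cInterval N a k ∩ T).card) := by
  have hlen : L.length = S.card := by
    rw [← hLS, List.toFinset_card_of_nodup hL]
  have hfold := cinv_fold N T L ∅ ∅ (cinv_init N T) hL (by simp) (by simp; omega)
  rw [Finset.empty_union, hLS] at hfold
  set P := L.foldl (placeOne N T) ∅ with hPdef
  have hPP : collapseParticles N T L = P := rfl
  have hchar := final_char N T S P hfold (by omega) a
  rw [hPP]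
  by_cases haT : a ∈ T
  · have h1 : configOf N T P a = Site.anti := by simp [configOf, haT]
    rw [h1]
    refine ⟨by simp [haT], ?_, ?_⟩
    · constructor
      · intro h; exact absurd h (by simp)
      · rintro ⟨h, _⟩; exact absurd haT h
    · constructor
      · intro h; exact absurd h (by simp)
      · rintro ⟨h, _⟩; exact absurd haT h
  · by_cases haP : a ∈ P
    · have h1 : configOf N T P a = Site.particle := by simp [configOf, haT, haP]
      rw [h1]
      refine ⟨by simp [haT], ?_, ?_⟩
      · simp only [true_iff]
        exact hchar.mp haP
      · constructor
        · intro h; exact absurd h (by simp)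
        · rintro ⟨h, hne⟩
          exact absurd (hchar.mp haP).2 hne
    · have h1 : configOf N T P a = Site.empty := by simp [configOf, haT, haP]
      rw [h1]
      refine ⟨?_, ?_, ?_⟩
      · constructor
        · intro h; exact absurd h (by simp)
        · intro h; exact absurd h haT
      · constructor
        · intro h; exact absurd h (by simp)
        · rintro ⟨_, hex⟩
          exact absurd (hchar.mpr ⟨haT, hex⟩) haP
      · simp only [true_iff]
        refine ⟨haT, fun hex => ?_⟩
        exact absurd (hchar.mpr ⟨haT, hex⟩) haP
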